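/- Let m ≥ 1 and a ∈ ℝ. Let P and C be real symmetric m×m matrices such that every eigenvalue of P lies in [λpmin, λpmax] and every eigenvalue of C lies in [λcmin, λcmax] with 0 < λcmin. Let k < 0 satisfy −1 − a + λpmax < k·λcmax and k·λcmin < 1 − a + λpmin. Then every eigenvalue of a·I_m − P + k·C lies in the open interval (−1, 1); in particular a·I_m − P + k·C is Schur stable. -/

import Mathlib

/-!
In the Loewner order, eigenvalue bounds for a Hermitian matrix are the same as two-sided bounds
by scalar matrices. Adding such bounds for `-P` and for `k • C` (the latter flipped since `k < 0`)
sandwiches `a • 1 - P + k • C` between `a - λpmax + k λcmax > -1` and `a - λpmin + k λcmin < 1`,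
so its eigenvalues lie in `(-1, 1)`. Because the matrix is real symmetric, its characteristic
polynomial splits over `ℝ`, so these real eigenvalues are all of its complex eigenvalues.
-/

open Matrix

/-- The multiset of complex eigenvalues (roots of the characteristic polynomial over ℂ,
with multiplicity) of a real square matrix. -/
noncomputable def cRoots {n : ℕ} (M : Matrix (Fin n) (Fin n) ℝ) : Multiset ℂ :=
  (M.map (Complex.ofReal)).charpoly.roots

/-- A real square matrix is Schur stable if all of its complex eigenvalues have
modulus strictly less than 1. -/
def SchurStable {n : ℕ} (M : Matrix (Fin n) (Fin n) ℝ) : Prop :=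
  ∀ μ ∈ cRoots M, ‖μ‖ < 1

open scoped MatrixOrder

namespace Matrix.IsHermitian

variable {𝕜 n : Type*} [RCLike 𝕜] [Fintype n] [DecidableEq n] {A : Matrix n n 𝕜}

theorem algebraMap_le_iff_le_eigenvalues (hA : A.IsHermitian) {r : ℝ} :
    algebraMap ℝ (Matrix n n 𝕜) r ≤ A ↔ ∀ i, r ≤ hA.eigenvalues i := by
  rw [algebraMap_le_iff_le_spectrum hA.isSelfAdjoint, hA.spectrum_real_eq_range_eigenvalues,
    Set.forall_mem_range]

theorem le_algebraMap_iff_eigenvalues_le (hA : A.IsHermitian) {r : ℝ} :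
    A ≤ algebraMap ℝ (Matrix n n 𝕜) r ↔ ∀ i, hA.eigenvalues i ≤ r := by
  rw [le_algebraMap_iff_spectrum_le hA.isSelfAdjoint, hA.spectrum_real_eq_range_eigenvalues,
    Set.forall_mem_range]

theorem eigenvalues_smul_one_sub_add_smul_mem_Icc {P C : Matrix n n 𝕜}
    (hP : P.IsHermitian) (hC : C.IsHermitian) {a k p₁ p₂ c₁ c₂ : ℝ} (hk : k ≤ 0)
    (hPev : ∀ i, p₁ ≤ hP.eigenvalues i ∧ hP.eigenvalues i ≤ p₂)
    (hCev : ∀ i, c₁ ≤ hC.eigenvalues i ∧ hC.eigenvalues i ≤ c₂)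
    (hM : (a • (1 : Matrix n n 𝕜) - P + k • C).IsHermitian) (i : n) :
    hM.eigenvalues i ∈ Set.Icc (a - p₂ + k * c₂) (a - p₁ + k * c₁) := by
  have hP₁ := hP.algebraMap_le_iff_le_eigenvalues.2 fun i => (hPev i).1
  have hP₂ := hP.le_algebraMap_iff_eigenvalues_le.2 fun i => (hPev i).2
  have hC₁ := hC.algebraMap_le_iff_le_eigenvalues.2 fun i => (hCev i).1
  have hC₂ := hC.le_algebraMap_iff_eigenvalues_le.2 fun i => (hCev i).2
  have hsplit (p c : ℝ) : algebraMap ℝ (Matrix n n 𝕜) (a - p + k * c) =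
      a • 1 - algebraMap ℝ _ p + k • algebraMap ℝ _ c := by
    simp only [Algebra.algebraMap_eq_smul_one, smul_smul, sub_smul, add_smul]
  refine ⟨hM.algebraMap_le_iff_le_eigenvalues.1 ?_ i, hM.le_algebraMap_iff_eigenvalues_le.1 ?_ i⟩
  · rw [hsplit]
    exact add_le_add (sub_le_sub_left hP₂ _) (smul_le_smul_of_nonpos_left hC₂ hk)
  · rw [hsplit]
    exact add_le_add (sub_le_sub_left hP₁ _) (smul_le_smul_of_nonpos_left hC₁ hk)

end Matrix.IsHermitian

theorem cRoots_eq_map_eigenvalues {n : ℕ} {M : Matrix (Fin n) (Fin n) ℝ} (hM : M.IsHermitian) :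
    cRoots M = Finset.univ.val.map fun i => (hM.eigenvalues i : ℂ) := by
  change (M.map Complex.ofRealHom).charpoly.roots = _
  rw [charpoly_map, hM.splits_charpoly.roots_map,
    hM.roots_charpoly_eq_eigenvalues, Multiset.map_map]
  rfl

theorem schurStable_of_abs_eigenvalues_lt_one {n : ℕ} {M : Matrix (Fin n) (Fin n) ℝ}
    (hM : M.IsHermitian) (h : ∀ i, |hM.eigenvalues i| < 1) : SchurStable M := by
  intro μ hμ
  rw [cRoots_eq_map_eigenvalues hM] at hμ
  obtain ⟨i, -, rfl⟩ := Multiset.mem_map.1 hμ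
  simpa using h i

theorem stmt_13_general (m : ℕ) (a : ℝ)
    (P C : Matrix (Fin m) (Fin m) ℝ)
    (hP : P.IsHermitian) (hC : C.IsHermitian)
    (lpmin lpmax lcmin lcmax : ℝ)
    (hPev : ∀ i, lpmin ≤ hP.eigenvalues i ∧ hP.eigenvalues i ≤ lpmax)
    (hCev : ∀ i, lcmin ≤ hC.eigenvalues i ∧ hC.eigenvalues i ≤ lcmax)
    (k : ℝ) (hk : k < 0)
    (h1 : -1 - a + lpmax < k * lcmax) (h2 : k * lcmin < 1 - a + lpmin) :
    (∀ (hM : (a • (1 : Matrix (Fin m) (Fin m) ℝ) - P + k • C).IsHermitian) (i : Fin m),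
        -1 < hM.eigenvalues i ∧ hM.eigenvalues i < 1) ∧
    SchurStable (a • (1 : Matrix (Fin m) (Fin m) ℝ) - P + k • C) := by
  have hbounds (hM : (a • (1 : Matrix (Fin m) (Fin m) ℝ) - P + k • C).IsHermitian) (i : Fin m) :
      -1 < hM.eigenvalues i ∧ hM.eigenvalues i < 1 := by
    obtain ⟨hlo, hhi⟩ := hP.eigenvalues_smul_one_sub_add_smul_mem_Icc hC hk.le hPev hCev hM i
    constructor <;> linarith
  have hM : (a • (1 : Matrix (Fin m) (Fin m) ℝ) - P + k • C).IsHermitian :=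
    ((isHermitian_one.smul (.all a)).sub hP).add (hC.smul (.all k))
  exact ⟨hbounds, schurStable_of_abs_eigenvalues_lt_one hM fun i => abs_lt.2 (hbounds hM i)⟩

theorem stmt_13 (m : ℕ) (hm : 1 ≤ m) (a : ℝ)
    (P C : Matrix (Fin m) (Fin m) ℝ)
    (hP : P.IsHermitian) (hC : C.IsHermitian)
    (lpmin lpmax lcmin lcmax : ℝ) (hlc : 0 < lcmin)
    (hPev : ∀ i, lpmin ≤ hP.eigenvalues i ∧ hP.eigenvalues i ≤ lpmax)
    (hCev : ∀ i, lcmin ≤ hC.eigenvalues i ∧ hC.eigenvalues i ≤ lcmax)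
    (k : ℝ) (hk : k < 0)
    (h1 : -1 - a + lpmax < k * lcmax) (h2 : k * lcmin < 1 - a + lpmin) :
    (∀ (hM : (a • (1 : Matrix (Fin m) (Fin m) ℝ) - P + k • C).IsHermitian) (i : Fin m),
        -1 < hM.eigenvalues i ∧ hM.eigenvalues i < 1) ∧
    SchurStable (a • (1 : Matrix (Fin m) (Fin m) ℝ) - P + k • C) :=
  stmt_13_general m a P C hP hC lpmin lpmax lcmin lcmax hPev hCev k hk h1 h2
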